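/- Fix integers $n \ge 3$ and $m = n - 1$. Let $G$ be a symmetric positive definite $m \times m$ real matrix, let $k \in \mathbb{R}^m$ and set $v = G k$, and let $\kappa, \tau$ be nonzero real numbers. Define the $n \times n$ matrix $H$ in block form (first $m$ rows/columns indexed by $\{1,\dots,m\}$, last row/column indexed by $n$) by: top-left $m \times m$ block $(4\, v v^T - \kappa\tau\, G)/\kappa^2$, top-right $m \times 1$ block $-(2/\kappa)\, v$, bottom-left $1 \times m$ block $-(2/\kappa)\, v^T$, and bottom-right entry $1$. Then $H$ is symmetric, and $H$ is positive definite if and only if $\kappa\,\tau < 0$. -/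

import Mathlib

/-!
Writing `B` for the off-diagonal column `-(2/κ) v`, the top-left block is `B Bᴴ - (τ/κ) G`, so
its Schur complement with respect to the bottom-right entry `1` is `-(τ/κ) G`. Block Gaussian
elimination `H = Lᴴ (diag (-(τ/κ) G) 1) L`, with `L` unit lower triangular, shows that `H` is
positive definite exactly when `-(τ/κ) G` is, i.e. (as `G` is positive definite) exactly when
`κ τ < 0`; symmetry is inherited in the same way.
-/

open scoped ComplexOrder

namespace Matrix

variable {m n 𝕜 : Type*} [RCLike 𝕜]

theorem PosDef.posDef_smul_iff {G : Matrix m m 𝕜} (hG : G.PosDef) [Nonempty m] {c : ℝ} :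
    (c • G).PosDef ↔ 0 < c := by
  refine ⟨fun h => ?_, hG.smul⟩
  obtain ⟨i⟩ := ‹Nonempty m›
  have hcG : 0 < c * RCLike.re (G i i) := by
    simpa [RCLike.smul_re] using (RCLike.pos_iff.mp (h.diag_pos (i := i))).1
  exact (pos_iff_pos_of_mul_pos hcG).2 (RCLike.pos_iff.mp hG.diag_pos).1

variable [Fintype m] [Fintype n]

theorem posDef_fromBlocks_zero_iff {A : Matrix m m 𝕜} {D : Matrix n n 𝕜} :
    (fromBlocks A 0 0 D).PosDef ↔ A.PosDef ∧ D.PosDef := by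
  refine ⟨fun h => ⟨h.submatrix Sum.inl_injective, h.submatrix Sum.inr_injective⟩,
    fun ⟨hA, hD⟩ => .of_dotProduct_mulVec_pos
      (hA.isHermitian.fromBlocks (by simp) hD.isHermitian) fun x hx => ?_⟩
  obtain ⟨y, z, rfl⟩ : ∃ y z, x = Sum.elim y z := ⟨_, _, (Sum.elim_comp_inl_inr x).symm⟩
  have hyz : y ≠ 0 ∨ z ≠ 0 := by
    by_contra! h
    exact hx (by simp [h.1, h.2])
  rw [fromBlocks_mulVec, Function.star_sumElim, sumElim_dotProduct_sumElim]
  simp only [Sum.elim_comp_inl, Sum.elim_comp_inr, zero_mulVec, add_zero, zero_add]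
  rcases hyz with hy | hz
  · exact add_pos_of_pos_of_nonneg (hA.dotProduct_mulVec_pos hy)
      (hD.posSemidef.dotProduct_mulVec_nonneg z)
  · exact add_pos_of_nonneg_of_pos (hA.posSemidef.dotProduct_mulVec_nonneg y)
      (hD.dotProduct_mulVec_pos hz)

theorem posDef_fromBlocks₂₂_iff [DecidableEq m] [DecidableEq n] (A : Matrix m m 𝕜)
    (B : Matrix m n 𝕜) {D : Matrix n n 𝕜} (hD : D.PosDef) :
    (fromBlocks A B Bᴴ D).PosDef ↔ (A - B * D⁻¹ * Bᴴ).PosDef := by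
  have := hD.isUnit.invertible
  set U : Matrix (m ⊕ n) (m ⊕ n) 𝕜 := fromBlocks 1 0 (D⁻¹ * Bᴴ) 1
  have hU : IsUnit U := isUnit_fromBlocks_zero₁₂.2 ⟨isUnit_one, isUnit_one⟩
  have hLDU : fromBlocks A B Bᴴ D = star U * fromBlocks (A - B * D⁻¹ * Bᴴ) 0 0 D * U := by
    rw [fromBlocks_eq_of_invertible₂₂ A B Bᴴ D, invOf_eq_nonsing_inv]
    simp [U, star_eq_conjTranspose, fromBlocks_conjTranspose, conjTranspose_nonsing_inv,
      hD.isHermitian.eq]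
  rw [hLDU, IsUnit.posDef_star_left_conjugate_iff hU, posDef_fromBlocks_zero_iff, and_iff_left hD]

end Matrix

open Matrix

theorem symmetrizer_positive_definite_iff
    (n : ℕ) (hn : 3 ≤ n)
    (G : Matrix (Fin (n - 1)) (Fin (n - 1)) ℝ) (hG : G.PosDef)
    (v : Fin (n - 1) → ℝ)
    (κ τ : ℝ) (hκ : κ ≠ 0)
    (H : Matrix (Fin (n - 1) ⊕ Unit) (Fin (n - 1) ⊕ Unit) ℝ)
    (hH : H = Matrix.fromBlocks
      (Matrix.of fun i j => (4 * v i * v j - κ * τ * G i j) / κ ^ 2)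
      (Matrix.of fun i _ => -(2 / κ) * v i)
      (Matrix.of fun _ j => -(2 / κ) * v j)
      (Matrix.of fun _ _ => 1)) :
    H.IsSymm ∧ (H.PosDef ↔ κ * τ < 0) := by
  set B : Matrix (Fin (n - 1)) Unit ℝ := of fun i _ => -(2 / κ) * v i
  have hC : (of fun _ j => -(2 / κ) * v j : Matrix Unit (Fin (n - 1)) ℝ) = Bᴴ := by
    ext; simp [B]
  have hA : of (fun i j => (4 * v i * v j - κ * τ * G i j) / κ ^ 2) =
      B * Bᴴ + (-(τ / κ)) • G := by
    ext i j
    simp only [B, of_apply, conjTranspose_eq_transpose_of_trivial, Matrix.add_apply, mul_apply,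
      transpose_apply, Finset.univ_unique, Finset.sum_singleton, Matrix.smul_apply, smul_eq_mul]
    field_simp
    ring
  have hD : (of fun _ _ => 1 : Matrix Unit Unit ℝ) = 1 := by ext; simp
  rw [hC, hA, hD] at hH
  subst hH
  have : Nonempty (Fin (n - 1)) := ⟨⟨0, by omega⟩⟩
  constructor
  · rw [← isHermitian_iff_isSymm, IsHermitian.fromBlocks₂₂ _ _ isHermitian_one, inv_one,
      Matrix.mul_one, add_sub_cancel_left]
    exact hG.isHermitian.smul (.all _)
  · rw [posDef_fromBlocks₂₂_iff _ _ .one, inv_one, Matrix.mul_one, add_sub_cancel_left,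
      hG.posDef_smul_iff, neg_pos, div_neg_iff, mul_neg_iff]
    tauto
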